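/- arXiv:2202.01766 — 2 statements merged into one kernel-verified Lean document; each statement's English description precedes it below -/
import Mathlib

section
/- Let $A$ be a unital complex Banach $\star$-algebra, $X$ a complex Banach space, and $\phi : A \times A \to X$ a continuous bilinear map such that $\phi(a^\star, b) = \phi(1, 1)$ whenever $a^\star b = 1$. Then $\phi(a, b) + \phi(b, a) = \phi(ab + ba, 1)$ for all $a, b \in A$. -/
/-!
Since `star` is an involution, the hypothesis says `φ u w = φ 1 1` whenever `u * w = 1`.
Differentiating this at `t = 0` along the pair `exp (t a) * v`, `w * exp (-t a)`, whose product
is `1` when `v w = 1`, gives `φ (a v) w = φ v (w a)` whenever `v w = 1`. Differentiating that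
identity once more along `v = exp (t b)`, `w = exp (-t b)` gives
`φ (a b) 1 - φ a b = φ b a - φ 1 (b a)`, and `φ 1 c = φ c 1` is the case `v = w = 1`.
-/

open NormedSpace

section

variable {𝕜 A X : Type*} [RCLike 𝕜] [NormedRing A] [NormedAlgebra 𝕜 A] [CompleteSpace A]
  [NormedAddCommGroup X] [NormedSpace 𝕜 X]

theorem exp_smul_mul_exp_smul_neg (x : A) (t : 𝕜) : exp (t • x) * exp (t • -x) = 1 := by
  have hball (y : A) : y ∈ Metric.eball 0 (expSeries 𝕜 A).radius := by
    simp [expSeries_radius_eq_top]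
  rw [smul_neg, ← exp_add_of_commute_of_mem_ball (Commute.refl (t • x)).neg_right (hball _)
    (hball _), add_neg_cancel, exp_zero]

variable (φ : A →L[𝕜] A →L[𝕜] X)

theorem hasDerivAt_apply_exp_smul_exp_smul_neg (p q r s x : A) :
    HasDerivAt (fun t : 𝕜 => φ (p * exp (t • x) * q) (r * exp (t • -x) * s))
      (φ (p * x * q) (r * s) - φ (p * q) (r * x * s)) 0 := by
  have hu := ((hasDerivAt_exp_smul_const x (0 : 𝕜)).const_mul p).mul_const q
  have hv := ((hasDerivAt_exp_smul_const (-x) (0 : 𝕜)).const_mul r).mul_const s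
  convert φ.hasDerivAt_of_bilinear (fun _ => hu) (fun _ => hv) using 1
  simp [sub_eq_neg_add]

theorem apply_mul_left_eq_apply_mul_right (hφ : ∀ u w : A, u * w = 1 → φ u w = φ 1 1)
    {v w : A} (hvw : v * w = 1) (a : A) : φ (a * v) w = φ v (w * a) := by
  have hconst :
      (fun t : 𝕜 => φ (1 * exp (t • a) * v) (w * exp (t • -a) * 1)) = fun _ => φ 1 1 := by
    funext t
    refine hφ _ _ ?_
    rw [one_mul, mul_one, mul_assoc, ← mul_assoc v, hvw, one_mul, exp_smul_mul_exp_smul_neg]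
  have hderiv := hasDerivAt_apply_exp_smul_exp_smul_neg φ 1 v w 1 a
  rw [hconst] at hderiv
  simpa using (sub_eq_zero.mp ((hasDerivAt_const (0 : 𝕜) (φ 1 1)).unique hderiv).symm)

theorem apply_add_apply_swap (hφ : ∀ u w : A, u * w = 1 → φ u w = φ 1 1) (a b : A) :
    φ a b + φ b a = φ (a * b + b * a) 1 := by
  have hcurves : (fun t : 𝕜 => φ (a * exp (t • b) * 1) (1 * exp (t • -b) * 1)) =
      fun t => φ (1 * exp (t • b) * 1) (1 * exp (t • -b) * a) := by
    funext t
    simpa using apply_mul_left_eq_apply_mul_right φ hφ (exp_smul_mul_exp_smul_neg b t) a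
  have hderiv := hasDerivAt_apply_exp_smul_exp_smul_neg φ a 1 1 1 b
  rw [hcurves] at hderiv
  have hsymm : φ 1 (b * a) = φ (b * a) 1 := by
    simpa using (apply_mul_left_eq_apply_mul_right φ hφ (one_mul 1) (b * a)).symm
  have hderivs_eq := hderiv.unique (hasDerivAt_apply_exp_smul_exp_smul_neg φ 1 1 1 a b)
  simp only [mul_one, one_mul, hsymm] at hderivs_eq
  rw [map_add, add_apply]
  linear_combination (norm := module) -hderivs_eq

end

theorem stmt_8_general (A X : Type*) [NormedRing A] [NormedAlgebra ℂ A] [CompleteSpace A]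
    [StarRing A]
    [NormedAddCommGroup X] [NormedSpace ℂ X]
    (φ : A →L[ℂ] A →L[ℂ] X)
    (h : ∀ a b : A, star a * b = 1 → φ (star a) b = φ 1 1) :
    ∀ a b : A, φ a b + φ b a = φ (a * b + b * a) 1 := by
  refine apply_add_apply_swap φ fun u w huw => ?_
  simpa using h (star u) w (by simpa using huw)

theorem stmt_8 (A X : Type*) [NormedRing A] [NormedAlgebra ℂ A] [CompleteSpace A]
    [StarRing A] [StarModule ℂ A] [ContinuousStar A]
    [NormedAddCommGroup X] [NormedSpace ℂ X] [CompleteSpace X]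
    (φ : A →L[ℂ] A →L[ℂ] X)
    (h : ∀ a b : A, star a * b = 1 → φ (star a) b = φ 1 1) :
    ∀ a b : A, φ a b + φ b a = φ (a * b + b * a) 1 :=
  stmt_8_general A X φ h
end

section
/- Let $A$ be a unital complex Banach $\star$-algebra, $X$ a complex Banach space, $z \in A$, and $\phi : A \times A \to X$ a continuous bilinear map such that $\phi(a^\star, b) = \phi(1, z)$ whenever $a^\star b = z$. Then $\phi(a, az) = \phi(1, a^2 z)$ and $\phi(1, az) = \phi(a, z)$ for all $a \in A$, and there is a continuous linear map $\Phi : A \to X$ with $\phi(a, bz) + \phi(b, az) = \Phi(ab + ba)$ for all $a, b \in A$. -/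
/-!
Taking `a = star u` in the hypothesis gives `φ u (u⁻¹ * z) = φ 1 z` for every unit `u`. For small
`t ≠ 0` apply this to `u = 1 + t • a`: with `v t = u⁻¹ * z` we have `v t = z - t • (a * v t)`, and
expanding bilinearly shows that `ψ b := φ a b - φ 1 (a * b)` vanishes at `v t`. As `t → 0`,
`v t → z` and `a * v t = t⁻¹ • (z - v t) → a * z`, so the closed subspace `ker ψ` contains `z` and
`a * z`. Polarizing `φ a (a * z) = φ 1 (a ^ 2 * z)` then gives `Φ b = φ 1 (b * z)`.
-/

open Filter Topology ContinuousLinearMap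

theorem Ring.inverse_one_add_mul_eq_sub {R : Type*} [Ring R] {b : R} (hb : IsUnit (1 + b))
    (z : R) : Ring.inverse (1 + b) * z = z - b * (Ring.inverse (1 + b) * z) := by
  have h := Ring.mul_inverse_cancel _ hb
  rw [add_mul, one_mul] at h
  conv_lhs => rw [eq_sub_of_add_eq h]
  rw [sub_mul, one_mul, mul_assoc]

section Resolvent

variable {𝕜 A X : Type*} [NontriviallyNormedField 𝕜] [NormedRing A] [NormedAlgebra 𝕜 A]
  [NormedAddCommGroup X] [NormedSpace 𝕜 X]

theorem exists_apply_mul_add_apply_mul_eq (φ : A →L[𝕜] A →L[𝕜] X) {z : A}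
    (h : ∀ a, φ a (a * z) = φ 1 (a ^ 2 * z)) :
    ∃ Φ : A →L[𝕜] X, ∀ a b, φ a (b * z) + φ b (a * z) = Φ (a * b + b * a) := by
  refine ⟨(φ 1).comp ((ContinuousLinearMap.mul 𝕜 A).flip z), fun a b => ?_⟩
  have hab := h (a + b)
  rw [show (a + b) ^ 2 = a ^ 2 + (a * b + b * a) + b ^ 2 by noncomm_ring] at hab
  simp only [map_add, add_mul, add_apply] at hab
  simp only [comp_apply, flip_apply, mul_apply', map_add]
  linear_combination (norm := abel) hab - h a - h b

theorem tendsto_one_add_smul (a : A) : Tendsto (fun t : 𝕜 => 1 + t • a) (𝓝 0) (𝓝 1) :=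
  (continuous_const.add (continuous_id.smul continuous_const)).tendsto' 0 1 (by simp)

variable [CompleteSpace A]

theorem eventually_isUnit_one_add_smul (a : A) : ∀ᶠ t : 𝕜 in 𝓝 0, IsUnit (1 + t • a) :=
  (tendsto_one_add_smul a).eventually (Units.isOpen.mem_nhds isUnit_one)

theorem tendsto_inverse_one_add_smul (a : A) :
    Tendsto (fun t : 𝕜 => Ring.inverse (1 + t • a)) (𝓝 0) (𝓝 1) := by
  have h := (NormedRing.inverse_continuousAt (1 : Aˣ)).tendsto
  rw [Units.val_one, Ring.inverse_one] at h
  exact h.comp (tendsto_one_add_smul a)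

theorem apply_one_mul_eq_and_apply_mul_eq_of_units (φ : A →L[𝕜] A →L[𝕜] X) {z : A}
    (hφ : ∀ u : Aˣ, φ u (↑u⁻¹ * z) = φ 1 z) (a : A) :
    φ 1 (a * z) = φ a z ∧ φ a (a * z) = φ 1 (a ^ 2 * z) := by
  set ψ : A →L[𝕜] X := φ a - (φ 1).comp (ContinuousLinearMap.mul 𝕜 A a)
  have hψ : ∀ b, ψ b = φ a b - φ 1 (a * b) := fun b => rfl
  set v : 𝕜 → A := fun t => Ring.inverse (1 + t • a) * z
  have hv : Tendsto v (𝓝[≠] 0) (𝓝 z) := by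
    simpa using ((tendsto_inverse_one_add_smul a).mul_const z).mono_left nhdsWithin_le_nhds
  have hv_eq : ∀ᶠ t in 𝓝[≠] (0 : 𝕜), IsUnit (1 + t • a) ∧ v t = z - t • (a * v t) := by
    filter_upwards [(eventually_isUnit_one_add_smul a).filter_mono nhdsWithin_le_nhds] with t ht
    exact ⟨ht, by rw [← smul_mul_assoc]; exact Ring.inverse_one_add_mul_eq_sub ht z⟩
  have hψv : ∀ᶠ t in 𝓝[≠] (0 : 𝕜), ψ (v t) = 0 := by
    filter_upwards [hv_eq, self_mem_nhdsWithin] with t ⟨⟨u, hu⟩, hvt⟩ ht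
    have h : φ (1 + t • a) (v t) = φ 1 z := by
      simpa only [← Ring.inverse_unit, hu] using hφ u
    have h1 : φ 1 (v t) = φ 1 z - t • φ 1 (a * v t) := by
      conv_lhs => rw [hvt]
      rw [map_sub, map_smul]
    have h' : t • ψ (v t) = 0 := by
      rw [map_add, map_smul, add_apply, smul_apply] at h
      rw [hψ, smul_sub]
      linear_combination (norm := module) h - h1
    exact (smul_eq_zero.mp h').resolve_left ht
  have hz : ψ z = 0 := ψ.isClosed_ker.mem_of_tendsto hv hψv
  have haz : ψ (a * z) = 0 := by
    refine ψ.isClosed_ker.mem_of_tendsto (hv.const_mul a) ?_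
    filter_upwards [hv_eq, hψv, self_mem_nhdsWithin] with t hvt hψvt ht
    have h : t • ψ (a * v t) = 0 := by
      have := congrArg ψ hvt.2
      rw [map_sub, map_smul, hz, hψvt] at this
      simpa using this.symm
    exact (smul_eq_zero.mp h).resolve_left ht
  rw [hψ, sub_eq_zero] at hz haz
  exact ⟨hz.symm, by rw [haz, sq, mul_assoc]⟩

end Resolvent

theorem stmt_17_general (A X : Type*) [NormedRing A] [NormedAlgebra ℂ A] [CompleteSpace A]
    [StarRing A]
    [NormedAddCommGroup X] [NormedSpace ℂ X]
    (z : A) (φ : A →L[ℂ] A →L[ℂ] X)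
    (h : ∀ a b : A, star a * b = z → φ (star a) b = φ 1 z) :
    (∀ a : A, φ a (a * z) = φ 1 (a ^ 2 * z)) ∧
    (∀ a : A, φ 1 (a * z) = φ a z) ∧
    ∃ Φ : A →L[ℂ] X, ∀ a b : A, φ a (b * z) + φ b (a * z) = Φ (a * b + b * a) := by
  have h_units (u : Aˣ) : φ u (↑u⁻¹ * z) = φ 1 z := by
    simpa using h (star (u : A)) (↑u⁻¹ * z) (by simp [← mul_assoc])
  have h_sq (a : A) := (apply_one_mul_eq_and_apply_mul_eq_of_units φ h_units a).2
  exact ⟨h_sq, fun a => (apply_one_mul_eq_and_apply_mul_eq_of_units φ h_units a).1,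
    exists_apply_mul_add_apply_mul_eq φ h_sq⟩

theorem stmt_17 (A X : Type*) [NormedRing A] [NormedAlgebra ℂ A] [CompleteSpace A]
    [StarRing A] [StarModule ℂ A] [ContinuousStar A]
    [NormedAddCommGroup X] [NormedSpace ℂ X] [CompleteSpace X]
    (z : A) (φ : A →L[ℂ] A →L[ℂ] X)
    (h : ∀ a b : A, star a * b = z → φ (star a) b = φ 1 z) :
    (∀ a : A, φ a (a * z) = φ 1 (a ^ 2 * z)) ∧
    (∀ a : A, φ 1 (a * z) = φ a z) ∧
    ∃ Φ : A →L[ℂ] X, ∀ a b : A, φ a (b * z) + φ b (a * z) = Φ (a * b + b * a) :=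
  stmt_17_general A X z φ h
end
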